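/- Let φ(r) = arcsin(2/r²) and, for p ∈ ℝ² with ‖p‖ > 100, write p = (r·cos θ, r·sin θ) and define g(p) = (p + f(p))/2 = (r·cos(φ(r)/2)·cos(θ + φ(r)/2), r·cos(φ(r)/2)·sin(θ + φ(r)/2)), where f(p) = (r·cos(θ + φ(r)), r·sin(θ + φ(r))). Then g is injective on {p : ‖p‖ > 100}, and for every measurable set E ⊆ {p ∈ ℝ² : ‖p‖ > 100} the image g(E) is measurable and μ(g(E)) ≥ (4/5)·μ(E). -/

import Mathlib

/-!
In complex notation `g z = cos ψ · e^{iψ} z` with `ψ = arcsin (2 / |z|²) / 2`, so `g` is a *radial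
twist* `z ↦ (a + b i)(|z|²) · z`. For such a map `|g z|² = h (|z|²)` with `h t = t (a² + b²)(t)`,
and its Jacobian determinant at `z` is `h' (|z|²)`: the rotation by an angle depending only on the
radius preserves area, while the radial part expands it by `h'`. Here `h t = (t + √(t² - 4)) / 2`
is strictly increasing, which gives injectivity, and `h' t = (1 + t / √(t² - 4)) / 2 ≥ 1`, so the
change-of-variables inequality `∫_E |det Dg| ≤ μ (g '' E)` gives `μ E ≤ μ (g '' E)`.
-/

open MeasureTheory Real ENNReal Set

theorem hasFDerivAt_radial_smul_add_smul {E : Type*} [NormedAddCommGroup E]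
    [InnerProductSpace ℝ E] {a b : ℝ → ℝ} {a' b' : ℝ} (J : E →L[ℝ] E) {x : E}
    (ha : HasDerivAt a a' (‖x‖ ^ 2)) (hb : HasDerivAt b b' (‖x‖ ^ 2)) :
    HasFDerivAt (fun y => a (‖y‖ ^ 2) • y + b (‖y‖ ^ 2) • J y)
      (a (‖x‖ ^ 2) • 1 + b (‖x‖ ^ 2) • J + (2 • innerSL ℝ x).smulRight (a' • x + b' • J x)) x := by
  have hN := (hasStrictFDerivAt_norm_sq x).hasFDerivAt
  refine (((ha.comp_hasFDerivAt x hN).smul (hasFDerivAt_id x)).add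
    ((hb.comp_hasFDerivAt x hN).smul J.hasFDerivAt)).congr_fderiv ?_
  ext v
  simp only [Function.comp_apply, id_eq, add_apply, smul_apply, ContinuousLinearMap.id_apply,
    ContinuousLinearMap.smulRight_apply, coe_innerSL_apply, nsmul_eq_mul, Nat.cast_ofNat, smul_eq_mul,
    one_apply_eq_self, smul_add]
  module

theorem le_addHaar_image_of_le_abs_det {E : Type*} [NormedAddCommGroup E] [NormedSpace ℝ E]
    [FiniteDimensional ℝ E] [MeasurableSpace E] [BorelSpace E] (μ : Measure E)
    [μ.IsAddHaarMeasure] {s : Set E} {f : E → E} {f' : E → E →L[ℝ] E} {c : ℝ≥0∞}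
    (hs : MeasurableSet s) (hf' : ∀ x ∈ s, HasFDerivWithinAt f (f' x) s x) (hf : InjOn f s)
    (hc : ∀ x ∈ s, c ≤ ENNReal.ofReal |(f' x).det|) :
    c * μ s ≤ μ (f '' s) :=
  calc c * μ s = ∫⁻ _ in s, c ∂μ := (setLIntegral_const s c).symm
    _ ≤ ∫⁻ x in s, ENNReal.ofReal |(f' x).det| ∂μ := setLIntegral_mono' hs hc
    _ ≤ μ (f '' s) := lintegral_abs_det_fderiv_le_addHaar_image μ hs hf' hf

local notation "ℝ²" => EuclideanSpace ℝ (Fin 2)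

noncomputable def rot90 : ℝ² →L[ℝ] ℝ² := Matrix.toEuclideanCLM (𝕜 := ℝ) !![0, -1; 1, 0]

@[simp] lemma rot90_apply_zero (v : ℝ²) : rot90 v 0 = -v 1 := by
  simp [rot90, Matrix.ofLp_toEuclideanCLM, Matrix.mulVec, dotProduct]

@[simp] lemma rot90_apply_one (v : ℝ²) : rot90 v 1 = v 0 := by
  simp [rot90, Matrix.ofLp_toEuclideanCLM, Matrix.mulVec, dotProduct]

lemma EuclideanSpace.norm_sq_fin_two (v : ℝ²) : ‖v‖ ^ 2 = v 0 ^ 2 + v 1 ^ 2 := by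
  simp [EuclideanSpace.norm_sq_eq, Fin.sum_univ_two]

lemma norm_smul_add_smul_rot90_sq (a b : ℝ) (v : ℝ²) :
    ‖a • v + b • rot90 v‖ ^ 2 = (a ^ 2 + b ^ 2) * ‖v‖ ^ 2 := by
  simp only [EuclideanSpace.norm_sq_fin_two, PiLp.add_apply, PiLp.smul_apply, smul_eq_mul,
    rot90_apply_zero, rot90_apply_one]
  ring

lemma det_smul_one_add_smul_rot90_add_smulRight (a b a' b' : ℝ) (x : ℝ²) :
    (a • 1 + b • rot90 + (2 • innerSL ℝ x).smulRight (a' • x + b' • rot90 x)).det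
      = a ^ 2 + b ^ 2 + 2 * ‖x‖ ^ 2 * (a * a' + b * b') := by
  rw [ContinuousLinearMap.det, ← LinearMap.det_toMatrix (EuclideanSpace.basisFun (Fin 2) ℝ).toBasis,
    Matrix.det_fin_two, EuclideanSpace.norm_sq_fin_two]
  simp only [ContinuousLinearMap.toLinearMap_add, ContinuousLinearMap.toLinearMap_smul,
    ContinuousLinearMap.toLinearMap_one, ContinuousLinearMap.coe_smulRight,
    ContinuousLinearMap.toLinearMap_innerSL_apply, Fin.isValue, LinearMap.toMatrix_apply,
    OrthonormalBasis.coe_toBasis, EuclideanSpace.basisFun_apply, LinearMap.add_apply,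
    LinearMap.smul_apply, Module.End.one_apply, ContinuousLinearMap.coe_coe, LinearMap.coe_smulRight,
    innerₛₗ_apply_apply, PiLp.inner_apply, PiLp.single_apply, RCLike.inner_apply, ringHom_apply,
    ite_mul, one_mul, zero_mul, Finset.sum_ite_eq', Finset.mem_univ, ↓reduceIte, nsmul_eq_mul,
    Nat.cast_ofNat, smul_add, map_add, map_smul, Finsupp.coe_add, Finsupp.coe_smul, Pi.add_apply,
    Pi.smul_apply, OrthonormalBasis.coe_toBasis_repr_apply, EuclideanSpace.basisFun_repr,
    smul_eq_mul, mul_one, rot90_apply_zero, one_ne_zero, neg_zero, mul_zero, add_zero, mul_neg, rot90_apply_one,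
    zero_ne_one, zero_add]
  ring

lemma exists_eq_polar (p : ℝ²) : ∃ θ : ℝ, p = !₂[‖p‖ * cos θ, ‖p‖ * sin θ] := by
  set z : ℂ := ⟨p 0, p 1⟩
  have hz : ‖z‖ = ‖p‖ := by
    rw [← sq_eq_sq₀ (norm_nonneg _) (norm_nonneg _), EuclideanSpace.norm_sq_fin_two,
      Complex.sq_norm, Complex.normSq_apply]
    ring
  refine ⟨z.arg, ?_⟩
  ext i
  fin_cases i
  · simpa [hz] using (Complex.norm_mul_cos_arg z).symm
  · simpa [hz] using (Complex.norm_mul_sin_arg z).symm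

lemma norm_sq_polar (r θ : ℝ) : ‖(!₂[r * cos θ, r * sin θ] : ℝ²)‖ ^ 2 = r ^ 2 := by
  rw [EuclideanSpace.norm_sq_fin_two]
  simp only [Matrix.cons_val_zero, Matrix.cons_val_one]
  linear_combination r ^ 2 * sin_sq_add_cos_sq θ

/-- In complex notation, `radialTwist a b z = (a + b i)(|z|²) · z`. -/
noncomputable def radialTwist (a b : ℝ → ℝ) (x : ℝ²) : ℝ² :=
  a (‖x‖ ^ 2) • x + b (‖x‖ ^ 2) • rot90 x

section RadialTwist

variable {a b : ℝ → ℝ}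

lemma norm_sq_radialTwist (x : ℝ²) :
    ‖radialTwist a b x‖ ^ 2 = ‖x‖ ^ 2 * (a (‖x‖ ^ 2) ^ 2 + b (‖x‖ ^ 2) ^ 2) := by
  rw [radialTwist, norm_smul_add_smul_rot90_sq, mul_comm]

lemma radialTwist_injOn {S : Set ℝ} (hS : InjOn (fun t => t * (a t ^ 2 + b t ^ 2)) S)
    (hab : ∀ t ∈ S, a t ^ 2 + b t ^ 2 ≠ 0) :
    InjOn (radialTwist a b) {x | ‖x‖ ^ 2 ∈ S} := by
  intro x hx y hy hxy
  have hnorm : ‖x‖ ^ 2 = ‖y‖ ^ 2 :=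
    hS hx hy (by dsimp only; rw [← norm_sq_radialTwist, ← norm_sq_radialTwist, hxy])
  have hsub : a (‖x‖ ^ 2) • (x - y) + b (‖x‖ ^ 2) • rot90 (x - y) = 0 := by
    rw [radialTwist, radialTwist, ← hnorm] at hxy
    rw [map_sub, smul_sub, smul_sub, sub_add_sub_comm, hxy, sub_self]
  have := norm_smul_add_smul_rot90_sq (a (‖x‖ ^ 2)) (b (‖x‖ ^ 2)) (x - y)
  rw [hsub, norm_zero, zero_pow two_ne_zero, eq_comm, mul_eq_zero, or_iff_right (hab _ hx),
    sq_eq_zero_iff, norm_eq_zero, sub_eq_zero] at this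
  exact this

lemma hasFDerivAt_radialTwist {x : ℝ²} {a' b' : ℝ} (ha : HasDerivAt a a' (‖x‖ ^ 2))
    (hb : HasDerivAt b b' (‖x‖ ^ 2)) :
    HasFDerivAt (radialTwist a b) (a (‖x‖ ^ 2) • 1 + b (‖x‖ ^ 2) • rot90 +
      (2 • innerSL ℝ x).smulRight (a' • x + b' • rot90 x)) x :=
  hasFDerivAt_radial_smul_add_smul rot90 ha hb

lemma det_fderiv_radialTwist {x : ℝ²} {a' b' h' : ℝ} (ha : HasDerivAt a a' (‖x‖ ^ 2))
    (hb : HasDerivAt b b' (‖x‖ ^ 2))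
    (h : HasDerivAt (fun t => t * (a t ^ 2 + b t ^ 2)) h' (‖x‖ ^ 2)) :
    (fderiv ℝ (radialTwist a b) x).det = h' := by
  rw [(hasFDerivAt_radialTwist ha hb).fderiv, det_smul_one_add_smul_rot90_add_smulRight]
  have := ((hasDerivAt_id _).mul ((ha.pow 2).add (hb.pow 2))).unique h
  rw [← this]
  simp only [Pi.add_apply, Pi.pow_apply, Nat.cast_ofNat]
  ring

end RadialTwist

noncomputable def halfAngle (t : ℝ) : ℝ := arcsin (2 / t) / 2

noncomputable def midpointMap : ℝ² → ℝ² :=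
  radialTwist (fun t => cos (halfAngle t) ^ 2) (fun t => cos (halfAngle t) * sin (halfAngle t))

lemma midpointMap_polar (r θ : ℝ) :
    midpointMap !₂[r * cos θ, r * sin θ] =
      !₂[r * cos (arcsin (2 / r ^ 2) / 2) * cos (θ + arcsin (2 / r ^ 2) / 2),
        r * cos (arcsin (2 / r ^ 2) / 2) * sin (θ + arcsin (2 / r ^ 2) / 2)] := by
  rw [midpointMap, radialTwist, norm_sq_polar, halfAngle]
  ext i
  fin_cases i
  · simp only [Fin.zero_eta, Fin.isValue, PiLp.add_apply, PiLp.smul_apply, Matrix.cons_val_zero,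
      smul_eq_mul, rot90_apply_zero, Matrix.cons_val_one, Matrix.cons_val_fin_one, mul_neg, cos_add]
    ring
  · simp only [Fin.mk_one, Fin.isValue, PiLp.add_apply, PiLp.smul_apply, Matrix.cons_val_one,
      Matrix.cons_val_fin_one, smul_eq_mul, rot90_apply_one, Matrix.cons_val_zero, sin_add]
    ring

noncomputable def normSqProfile (t : ℝ) : ℝ := (t + √(t ^ 2 - 4)) / 2

lemma eqOn_normSqProfile :
    EqOn (fun t => t * ((cos (halfAngle t) ^ 2) ^ 2 + (cos (halfAngle t) * sin (halfAngle t)) ^ 2))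
      normSqProfile (Ioi 0) := by
  rintro t (ht : 0 < t)
  have hsqrt : t * √(1 - (2 / t) ^ 2) = √(t ^ 2 - 4) := by
    rw [← sqrt_sq ht.le, ← sqrt_mul (sq_nonneg t), sqrt_sq ht.le]
    congr 1
    field_simp
    norm_num
  have hcoeff : (cos (halfAngle t) ^ 2) ^ 2 + (cos (halfAngle t) * sin (halfAngle t)) ^ 2
      = cos (halfAngle t) ^ 2 := by
    linear_combination cos (halfAngle t) ^ 2 * sin_sq_add_cos_sq (halfAngle t)
  dsimp only
  rw [hcoeff, halfAngle, cos_sq, mul_div_cancel₀ _ two_ne_zero, cos_arcsin, normSqProfile, ← hsqrt]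
  ring

lemma hasDerivAt_normSqProfile {t : ℝ} (ht : 2 < t) :
    HasDerivAt normSqProfile ((1 + t / √(t ^ 2 - 4)) / 2) t := by
  have hpos : t ^ 2 - 4 ≠ 0 := by nlinarith
  have h := ((hasDerivAt_id' t).add (((hasDerivAt_pow 2 t).sub_const 4).sqrt hpos)).div_const 2
  refine h.congr_deriv ?_
  field_simp
  ring

lemma one_le_deriv_normSqProfile {t : ℝ} (ht : 2 < t) : 1 ≤ (1 + t / √(t ^ 2 - 4)) / 2 := by
  have hpos : 0 < √(t ^ 2 - 4) := sqrt_pos.2 (by nlinarith)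
  have hle : √(t ^ 2 - 4) ≤ t := by
    rw [sqrt_le_left (by linarith)]
    linarith
  have : 1 ≤ t / √(t ^ 2 - 4) := (one_le_div hpos).2 hle
  linarith

lemma normSqProfile_strictMonoOn : StrictMonoOn normSqProfile (Ici 2) := by
  intro s hs t ht hst
  have : √(s ^ 2 - 4) ≤ √(t ^ 2 - 4) := by
    gcongr
    exact zero_le_two.trans hs
  unfold normSqProfile
  linarith

lemma differentiableAt_halfAngle {t : ℝ} (ht : 2 < t) : DifferentiableAt ℝ halfAngle t := by
  have ht0 : 0 < t := by linarith
  have h_lt_one : 2 / t < 1 := (div_lt_one ht0).2 ht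
  have h_pos : 0 < 2 / t := div_pos two_pos ht0
  exact ((differentiableAt_arcsin.2 ⟨by linarith, h_lt_one.ne⟩).comp t
    ((differentiableAt_const 2).div differentiableAt_id ht0.ne')).div_const 2

lemma cos_halfAngle_pos (t : ℝ) : 0 < cos (halfAngle t) := by
  apply cos_pos_of_mem_Ioo
  constructor <;> linarith [neg_pi_div_two_le_arcsin (2 / t), arcsin_le_pi_div_two (2 / t), pi_pos,
    show halfAngle t = arcsin (2 / t) / 2 from rfl]

lemma midpointMap_injOn : InjOn midpointMap {x | ‖x‖ ^ 2 ∈ Ioi 2} := by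
  refine radialTwist_injOn ?_ fun t _ => ?_
  · exact (normSqProfile_strictMonoOn.injOn.mono Ioi_subset_Ici_self).congr
      (eqOn_normSqProfile.mono (Ioi_subset_Ioi zero_le_two)).symm
  · have := cos_halfAngle_pos t
    positivity

lemma differentiableAt_midpointMap_coeffs {t : ℝ} (ht : 2 < t) :
    DifferentiableAt ℝ (fun t => cos (halfAngle t) ^ 2) t ∧
      DifferentiableAt ℝ (fun t => cos (halfAngle t) * sin (halfAngle t)) t :=
  have hψ := differentiableAt_halfAngle ht
  ⟨hψ.cos.pow 2, hψ.cos.mul hψ.sin⟩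

lemma differentiableAt_midpointMap {x : ℝ²} (hx : 2 < ‖x‖ ^ 2) :
    DifferentiableAt ℝ midpointMap x :=
  have ⟨ha, hb⟩ := differentiableAt_midpointMap_coeffs hx
  (hasFDerivAt_radialTwist ha.hasDerivAt hb.hasDerivAt).differentiableAt

lemma one_le_det_fderiv_midpointMap {x : ℝ²} (hx : 2 < ‖x‖ ^ 2) :
    1 ≤ (fderiv ℝ midpointMap x).det := by
  obtain ⟨ha, hb⟩ := differentiableAt_midpointMap_coeffs hx
  rw [midpointMap, det_fderiv_radialTwist ha.hasDerivAt hb.hasDerivAt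
    ((hasDerivAt_normSqProfile hx).congr_of_eventuallyEq
      (eqOn_normSqProfile.eventuallyEq_of_mem (Ioi_mem_nhds (by linarith))))]
  exact one_le_deriv_normSqProfile hx

/-- The map `g(p) = (p + f(p))/2`, where `f` rotates the point of polar coordinates `(r, θ)`
to `(r, θ + arcsin(2/r²))`, is injective on `{p : ‖p‖ > 100}` and expands Lebesgue measure
by a factor of at least `4/5` there. -/
theorem midpoint_map_injective_measure_bound
    (g : EuclideanSpace ℝ (Fin 2) → EuclideanSpace ℝ (Fin 2))
    (hg : ∀ r θ : ℝ, 100 < r →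
      g !₂[r * Real.cos θ, r * Real.sin θ] =
        !₂[r * Real.cos (Real.arcsin (2 / r ^ 2) / 2) *
            Real.cos (θ + Real.arcsin (2 / r ^ 2) / 2),
          r * Real.cos (Real.arcsin (2 / r ^ 2) / 2) *
            Real.sin (θ + Real.arcsin (2 / r ^ 2) / 2)]) :
    Set.InjOn g {p : EuclideanSpace ℝ (Fin 2) | 100 < ‖p‖} ∧
    ∀ E : Set (EuclideanSpace ℝ (Fin 2)),
      E ⊆ {p : EuclideanSpace ℝ (Fin 2) | 100 < ‖p‖} → MeasurableSet E →
      MeasurableSet (g '' E) ∧ (4 / 5 : ℝ≥0∞) * volume E ≤ volume (g '' E) := by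
  have hg_eq : EqOn g midpointMap {p | 100 < ‖p‖} := fun p hp => by
    obtain ⟨θ, hθ⟩ := exists_eq_polar p
    rw [hθ, hg _ _ hp, midpointMap_polar]
  have h_two : ∀ p ∈ {p : ℝ² | 100 < ‖p‖}, 2 < ‖p‖ ^ 2 := fun p (hp : 100 < ‖p‖) => by nlinarith
  have hinj : InjOn midpointMap {p : ℝ² | 100 < ‖p‖} := midpointMap_injOn.mono h_two
  refine ⟨hinj.congr hg_eq.symm, fun E hE hEm => ?_⟩
  have hD : ∀ x ∈ E, HasFDerivWithinAt midpointMap (fderiv ℝ midpointMap x) E x := fun x hx =>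
    (differentiableAt_midpointMap (h_two x (hE hx))).hasFDerivAt.hasFDerivWithinAt
  rw [(hg_eq.mono hE).image_eq]
  refine ⟨measurable_image_of_fderivWithin hEm hD (hinj.mono hE),
    le_addHaar_image_of_le_abs_det volume hEm hD (hinj.mono hE) fun x hx => ?_⟩
  calc (4 / 5 : ℝ≥0∞) ≤ ENNReal.ofReal 1 := by
        rw [ENNReal.ofReal_one]; exact ENNReal.div_le_of_le_mul (by norm_num)
    _ ≤ _ := ENNReal.ofReal_le_ofReal
      ((one_le_det_fderiv_midpointMap (h_two x (hE hx))).trans (le_abs_self _))
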